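/- arXiv:2403.08110 — 3 statements merged into one kernel-verified Lean document; each statement's English description precedes it below -/
import Mathlib

section
/- Let s : Q → P be a folding of finite posets and N a Q-module such that the s-folding Fld_s(N) exists. Then for any submodule N′ ⊆ N that is s-foldable, the s-folding Fld_s(N′) exists. -/
open Module

/-! # Preamble: persistence modules over finite posets -/

/-- A `P`-module: a functor from the poset `P` to finite-dimensional
`F`-vector spaces. -/
structure PModule (F : Type) [Field F] (P : Type) [PartialOrder P] where
  V : P → Type
  [addCommGroup : ∀ p, AddCommGroup (V p)]
  [module : ∀ p, Module F (V p)]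
  [fd : ∀ p, FiniteDimensional F (V p)]
  map : ∀ {p q : P}, p ≤ q → (V p →ₗ[F] V q)
  map_id : ∀ p : P, map (le_refl p) = LinearMap.id
  map_comp : ∀ {p q r : P} (hpq : p ≤ q) (hqr : q ≤ r),
    map (hpq.trans hqr) = (map hqr).comp (map hpq)

attribute [instance] PModule.addCommGroup PModule.module PModule.fd

variable {F : Type} [Field F] {P : Type} [PartialOrder P] {Q : Type} [PartialOrder Q]

/-- A submodule of a `P`-module: a choice of subspace at every point,
preserved by the structure maps. -/
structure PSubmodule {F : Type} [Field F] {P : Type} [PartialOrder P]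
    (M : PModule F P) where
  S : ∀ p : P, Submodule F (M.V p)
  map_le : ∀ {p q : P} (h : p ≤ q), (S p).map (M.map h) ≤ S q

/-- A submodule of a `P`-module, viewed as a `P`-module in its own right
(with the restricted structure maps). -/
def PSubmodule.toModule {M : PModule F P} (A : PSubmodule M) : PModule F P where
  V p := ↥(A.S p)
  map {p q} h := (M.map h).restrict (fun x hx => A.map_le h ⟨x, hx, rfl⟩)
  map_id p := by
    apply LinearMap.ext; intro x; apply Subtype.ext
    simp [LinearMap.restrict_apply, M.map_id]
  map_comp {p q r} hpq hqr := by
    apply LinearMap.ext; intro x; apply Subtype.ext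
    simp [LinearMap.restrict_apply, M.map_comp hpq hqr]

/-- The trivial (zero) submodule predicate. -/
def PSubmodule.IsTrivial {M : PModule F P} (A : PSubmodule M) : Prop :=
  ∀ p, A.S p = ⊥

/-- Indecomposability of a submodule of a `P`-module: it is nonzero and
admits no splitting into two nonzero parts. -/
def Indecomposable (M : PModule F P) (N : PSubmodule M) : Prop :=
  ¬ N.IsTrivial ∧
    ∀ A B : PSubmodule M,
      (∀ p, Disjoint (A.S p) (B.S p)) → (∀ p, A.S p ⊔ B.S p = N.S p) →
      A.IsTrivial ∨ B.IsTrivial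

/-- An internal direct-sum decomposition of a `P`-module into submodules. -/
structure Decomp {F : Type} [Field F] {P : Type} [PartialOrder P]
    (M : PModule F P) where
  ι : Type
  [fin : Fintype ι]
  N : ι → PSubmodule M
  indep : ∀ p, iSupIndep fun i => (N i).S p
  total : ∀ p, (⨆ i, (N i).S p) = ⊤

attribute [instance] Decomp.fin

/-- A decomposition into indecomposable submodules. -/
def Decomp.Indec {M : PModule F P} (D : Decomp M) : Prop :=
  ∀ i, Indecomposable M (D.N i)

/-! ## Hasse diagram, connectivity, intervals -/

/-- Hasse-connectivity of a subset of a poset: any two of its points are joined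
inside the subset by a sequence of immediate (covering) pairs. -/
def HasseConnected (I : Set P) : Prop :=
  ∀ (p : P) (hp : p ∈ I) (q : P) (hq : q ∈ I),
    Relation.ReflTransGen (fun a b : I => (a : P) ⋖ (b : P) ∨ (b : P) ⋖ (a : P))
      ⟨p, hp⟩ ⟨q, hq⟩

/-- A connected poset: any two points are joined by a sequence of
immediate (covering) pairs. -/
def IsConnectedPoset (P : Type) [PartialOrder P] : Prop :=
  ∀ p q : P, Relation.ReflTransGen (fun a b : P => a ⋖ b ∨ b ⋖ a) p q

/-- An interval of a poset: nonempty, convex and Hasse-connected. -/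
def IsIntervalSet (I : Set P) : Prop :=
  I.Nonempty ∧
  (∀ p q r : P, p ∈ I → q ∈ I → p ≤ r → r ≤ q → r ∈ I) ∧
  HasseConnected I

/-- The support of a submodule of a `P`-module. -/
def PSubmodule.supp {M : PModule F P} (A : PSubmodule M) : Set P :=
  {p | A.S p ≠ ⊥}

/-- A submodule is an interval submodule (isomorphic to an interval module):
its support is an interval, its spaces are one-dimensional on the support and
its internal structure maps are isomorphisms on the support. -/
def IsIntervalSub (M : PModule F P) (A : PSubmodule M) : Prop :=
  IsIntervalSet A.supp ∧
  (∀ p, p ∈ A.supp → finrank F (A.S p) = 1) ∧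
  (∀ (p q : P) (h : p ≤ q), p ∈ A.supp → q ∈ A.supp →
      (A.S p).map (M.map h) = A.S q)

/-- A full interval submodule: one-dimensional everywhere with structure maps
restricting to isomorphisms. -/
def IsFullIntervalSub (M : PModule F P) (A : PSubmodule M) : Prop :=
  (∀ p, finrank F (A.S p) = 1) ∧
  (∀ (p q : P) (h : p ≤ q), (A.S p).map (M.map h) = A.S q)

/-- A decomposition into interval submodules. -/
def Decomp.IsIntervalDecomp {M : PModule F P} (D : Decomp M) : Prop :=
  ∀ i, IsIntervalSub M (D.N i)

/-! ## Limits and colimits of `P`-modules -/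

/-- The space of global sections of `M`, realized as a submodule of the
product `∀ p, M.V p` (which for finite `P` is the direct sum `⊕_p M(p)`). -/
def PModule.limSub (M : PModule F P) : Submodule F (∀ p, M.V p) where
  carrier := {v | ∀ (p q : P) (h : p ≤ q), M.map h (v p) = v q}
  add_mem' := by
    intro a b ha hb p q h
    simp only [Pi.add_apply, map_add, ha p q h, hb p q h]
  zero_mem' := by intro p q h; simp
  smul_mem' := by
    intro c a ha p q h
    simp only [Pi.smul_apply, map_smul, ha p q h]

/-- The (concrete) limit of a `P`-module. -/
def PModule.limType (M : PModule F P) : Type := ↥M.limSub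

noncomputable instance (M : PModule F P) : AddCommGroup M.limType :=
  inferInstanceAs (AddCommGroup ↥M.limSub)

noncomputable instance (M : PModule F P) : Module F M.limType :=
  inferInstanceAs (Module F ↥M.limSub)

instance (M : PModule F P) [Fintype P] : FiniteDimensional F M.limType :=
  inferInstanceAs (FiniteDimensional F ↥M.limSub)

/-- The canonical projection from the concrete limit to `M(p)`. -/
noncomputable def PModule.limProj (M : PModule F P) (p : P) : M.limType →ₗ[F] M.V p :=
  (LinearMap.proj p).comp M.limSub.subtype

/-- The subspace of relations defining the colimit:
generated by the vectors `j_p(v) - j_q(M(p ≤ q) v)`. -/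
def PModule.colimRel (M : PModule F P) [DecidableEq P] :
    Submodule F (∀ p, M.V p) :=
  Submodule.span F
    {x | ∃ (p q : P) (h : p ≤ q) (v : M.V p),
      x = Pi.single p v - Pi.single q (M.map h v)}

/-- The (concrete) colimit of a `P`-module. -/
def PModule.colimType (M : PModule F P) [DecidableEq P] : Type :=
  (∀ p, M.V p) ⧸ M.colimRel

noncomputable instance (M : PModule F P) [DecidableEq P] :
    AddCommGroup M.colimType :=
  inferInstanceAs (AddCommGroup ((∀ p, M.V p) ⧸ M.colimRel))

noncomputable instance (M : PModule F P) [DecidableEq P] : Module F M.colimType :=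
  inferInstanceAs (Module F ((∀ p, M.V p) ⧸ M.colimRel))

instance (M : PModule F P) [Fintype P] [DecidableEq P] :
    FiniteDimensional F M.colimType :=
  inferInstanceAs (FiniteDimensional F ((∀ p, M.V p) ⧸ M.colimRel))

/-- The canonical map from `M(p)` to the concrete colimit. -/
noncomputable def PModule.colimInj (M : PModule F P) [DecidableEq P] (p : P) :
    M.V p →ₗ[F] M.colimType :=
  M.colimRel.mkQ.comp (LinearMap.single F M.V p)

/-- The limit-to-colimit map obtained by passing through `M(p)`. -/
noncomputable def PModule.psiAt (M : PModule F P) [DecidableEq P] (p : P) :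
    M.limType →ₗ[F] M.colimType :=
  (M.colimInj p).comp (M.limProj p)

/-- The generalized rank computed through the point `p`. -/
noncomputable def genRankAt (M : PModule F P) [Fintype P] [DecidableEq P]
    (p : P) : ℕ :=
  finrank F (LinearMap.range (M.psiAt p))

/-- The generalized rank of a `P`-module (for connected `P` this is
independent of the chosen point). -/
noncomputable def genRank (M : PModule F P) [Fintype P] [DecidableEq P]
    [Nonempty P] : ℕ :=
  genRankAt M (Classical.arbitrary P)

/-- A cone over a `P`-module. -/
def IsCone (M : PModule F P) {L : Type} [AddCommGroup L] [Module F L]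
    (π : ∀ p, L →ₗ[F] M.V p) : Prop :=
  ∀ (p q : P) (h : p ≤ q), (M.map h).comp (π p) = π q

/-- A limit cone (terminal cone) over a `P`-module, within the category of
finite-dimensional `F`-vector spaces. -/
def IsLimitCone (M : PModule F P) {L : Type} [AddCommGroup L] [Module F L]
    (π : ∀ p, L →ₗ[F] M.V p) : Prop :=
  IsCone M π ∧
  ∀ (L' : Type) [AddCommGroup L'] [Module F L'] [FiniteDimensional F L']
    (π' : ∀ p, L' →ₗ[F] M.V p), IsCone M π' →
      ∃! u : L' →ₗ[F] L, ∀ p, (π p).comp u = π' p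

/-- A cocone over a `P`-module. -/
def IsCocone (M : PModule F P) {C : Type} [AddCommGroup C] [Module F C]
    (i : ∀ p, M.V p →ₗ[F] C) : Prop :=
  ∀ (p q : P) (h : p ≤ q), (i q).comp (M.map h) = i p

/-- A colimit cocone (initial cocone) over a `P`-module, within the category
of finite-dimensional `F`-vector spaces. -/
def IsColimitCocone (M : PModule F P) {C : Type} [AddCommGroup C] [Module F C]
    (i : ∀ p, M.V p →ₗ[F] C) : Prop :=
  IsCocone M i ∧
  ∀ (C' : Type) [AddCommGroup C'] [Module F C'] [FiniteDimensional F C']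
    (i' : ∀ p, M.V p →ₗ[F] C'), IsCocone M i' →
      ∃! u : C →ₗ[F] C', ∀ p, u.comp (i p) = i' p

/-! ## Foldings -/

/-- A folding of a poset `Q` onto a poset `P`: an order-preserving surjection
which also surjects onto the Hasse diagram of `P`. -/
structure Folding (Q P : Type) [PartialOrder Q] [PartialOrder P] where
  toFun : Q → P
  surj : Function.Surjective toFun
  mono : ∀ {a b : Q}, a ≤ b → toFun a ≤ toFun b
  hasse : ∀ {u v : P}, u ⋖ v → ∃ a b : Q, a ≤ b ∧ toFun a = u ∧ toFun b = v

/-- Precomposition of a `P`-module with a folding `s : Q → P`; this is the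
induced `s`-unfolding `Fld_s⁻¹(M) = M ∘ s`. -/
def PModule.comp (M : PModule F P) (s : Folding Q P) : PModule F Q where
  V q := M.V (s.toFun q)
  map {a b} h := M.map (s.mono h)
  map_id q := M.map_id (s.toFun q)
  map_comp {a b c} hab hbc := M.map_comp (s.mono hab) (s.mono hbc)

/-- `A` is (equal to) a submodule of the `P`-module `M`. -/
def IsSubmoduleOf (A M : PModule F P) : Prop :=
  ∃ S : PSubmodule M, S.toModule = A

/-- `s`-foldability of a submodule: it assigns equal subspaces to any two
points with the same image under the folding. -/
def PSubmodule.Foldable (s : Folding Q P) {N : PModule F Q}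
    (A : PSubmodule N) : Prop :=
  ∀ q q' : Q, s.toFun q = s.toFun q' → HEq (A.S q) (A.S q')

/-! ## Isomorphisms, direct sums and quotients of `P`-modules -/

/-- An isomorphism of `P`-modules. -/
structure PIso (A B : PModule F P) where
  e : ∀ p, A.V p ≃ₗ[F] B.V p
  comm : ∀ {p q : P} (h : p ≤ q),
    (B.map h).comp (e p : A.V p →ₗ[F] B.V p) = (e q : A.V q →ₗ[F] B.V q).comp (A.map h)

/-- The external direct sum of two `P`-modules. -/
def PModule.dsum (A B : PModule F P) : PModule F P where
  V p := A.V p × B.V p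
  map {p q} h := (A.map h).prodMap (B.map h)
  map_id p := by
    show (A.map (le_refl p)).prodMap (B.map (le_refl p)) = LinearMap.id
    rw [A.map_id, B.map_id]; exact LinearMap.prodMap_id
  map_comp {p q r} hpq hqr := by
    show (A.map (hpq.trans hqr)).prodMap (B.map (hpq.trans hqr)) =
      ((A.map hqr).prodMap (B.map hqr)).comp ((A.map hpq).prodMap (B.map hpq))
    rw [A.map_comp hpq hqr, B.map_comp hpq hqr, LinearMap.prodMap_comp]

/-- The quotient of a `P`-module by a submodule. -/
def PModule.quot (M : PModule F P) (A : PSubmodule M) : PModule F P where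
  V p := M.V p ⧸ A.S p
  map {p q} h :=
    Submodule.mapQ (A.S p) (A.S q) (M.map h)
      (Submodule.map_le_iff_le_comap.mp (A.map_le h))
  map_id p := by
    apply Submodule.linearMap_qext
    apply LinearMap.ext; intro x
    simp [Submodule.mapQ_apply, M.map_id]
  map_comp {p q r} hpq hqr := by
    apply Submodule.linearMap_qext
    apply LinearMap.ext; intro x
    simp [Submodule.mapQ_apply, M.map_comp hpq hqr]

/-! ## Zigzag posets, limit modules, representatives -/

/-- A zigzag poset: a finite poset admitting a linear enumeration of its
points in which consecutive comparabilities are exactly the immediate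
(covering) pairs. -/
def IsZigzag (P : Type) [PartialOrder P] [Fintype P] : Prop :=
  ∃ e : Fin (Fintype.card P) ≃ P,
    (∀ (i : ℕ) (h1 : i < Fintype.card P) (h2 : i + 1 < Fintype.card P),
      e ⟨i, h1⟩ ⋖ e ⟨i + 1, h2⟩ ∨ e ⟨i + 1, h2⟩ ⋖ e ⟨i, h1⟩) ∧
    (∀ a b : Fin (Fintype.card P), e a ⋖ e b →
      (a : ℕ) + 1 = b ∨ (b : ℕ) + 1 = a)

/-- A limit module: a submodule that is a direct sum of interval submodules
over pairwise disjoint intervals, all of whose internal structure maps are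
surjective. -/
def IsLimitModule (M : PModule F P) (A : PSubmodule M) : Prop :=
  (∃ (ι : Type) (C : ι → PSubmodule M),
    (∀ i, IsIntervalSub M (C i)) ∧
    (Pairwise fun i j => Disjoint (C i).supp (C j).supp) ∧
    (∀ p, A.S p = ⨆ i, (C i).S p)) ∧
  (∀ (p q : P) (h : p ≤ q), (A.S p).map (M.map h) = A.S q)

/-- A (limit) representative of a submodule: a family of vectors spanning the
subspace at every point. -/
def IsRepr {M : PModule F P} (A : PSubmodule M) (b : ∀ p, M.V p) : Prop :=
  ∀ p, A.S p = Submodule.span F {b p}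

/-! ## s-complete, convertible, invertible -/

/-- Invertibility of the complement of the summand `D.N i`: there is an
`s`-foldable submodule `Q₀` with `N = Q₀ ⊕ D.N i`. -/
def Decomp.InvertibleCompl (s : Folding Q P) {N : PModule F Q}
    (D : Decomp N) (i : D.ι) : Prop :=
  ∃ Q₀ : PSubmodule N, Q₀.Foldable s ∧ ∀ q, IsCompl (Q₀.S q) ((D.N i).S q)

/-- `s`-completeness of the summand `D.N i`: it is a full interval module
which is `s`-foldable and has invertible complement. -/
def Decomp.SComplete (s : Folding Q P) {N : PModule F Q}
    (D : Decomp N) (i : D.ι) : Prop :=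
  IsFullIntervalSub N (D.N i) ∧ (D.N i).Foldable s ∧ D.InvertibleCompl s i

/-- The number of `s`-complete interval summands in the decomposition. -/
noncomputable def Decomp.kappa (s : Folding Q P) {N : PModule F Q}
    (D : Decomp N) : ℕ :=
  Nat.card {i : D.ι // D.SComplete s i}

/-- Convertibility of the full interval summand `D.N i`: it is `s`-foldable,
or it can be made `s`-foldable by adding a combination of representatives of
limit modules of the decomposition to its representative. -/
def Decomp.Convertible (s : Folding Q P) {N : PModule F Q}
    (D : Decomp N) (i : D.ι) : Prop :=
  IsFullIntervalSub N (D.N i) ∧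
  ((D.N i).Foldable s ∨
    ∃ (bI : ∀ q, N.V q) (α : D.ι → F) (b : D.ι → ∀ q, N.V q),
      IsRepr (D.N i) bI ∧
      (∀ j, α j ≠ 0 → j ≠ i ∧ IsLimitModule N (D.N j) ∧ IsRepr (D.N j) (b j)) ∧
      ∃ I' : PSubmodule N, IsFullIntervalSub N I' ∧ I'.Foldable s ∧
        IsRepr I' (fun q => bI q + ∑ j, α j • b j q))

/-- The number of summands of the decomposition that are convertible with
invertible complement. -/
noncomputable def Decomp.tau (s : Folding Q P) {N : PModule F Q}
    (D : Decomp N) : ℕ :=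
  Nat.card {i : D.ι // D.Convertible s i ∧ D.InvertibleCompl s i}

/-! ## Poset sizes, misc -/

/-- A packaged finite poset. -/
structure FinPoset where
  carrier : Type
  [po : PartialOrder carrier]
  [ft : Fintype carrier]

attribute [instance] FinPoset.po FinPoset.ft

/-- The number of immediate (covering) pairs of a finite poset. -/
noncomputable def coverCard (P : Type) [PartialOrder P] [Fintype P] : ℕ :=
  Nat.card {x : P × P // x.1 ⋖ x.2}

/-- The size of a finite poset: number of points plus number of immediate
pairs of its Hasse diagram. -/
noncomputable def posetSize (P : Type) [PartialOrder P] [Fintype P] : ℕ :=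
  Fintype.card P + coverCard P

open Classical in
/-- Update of a function at one argument (classical version). -/
noncomputable def updFun {α β : Type} (f : α → β) (a : α) (v : β) : α → β :=
  fun x => if x = a then v else f x

/-! A foldable submodule of `M ∘ s` has the same subspace at all points of a fibre of `s`, so it
descends to a family of subspaces of `M`. Every Hasse pair `u ⋖ v` of `P` is the image of a
comparable pair of `Q`, so the descended family is preserved along covers, hence along all of `≤`
since `P` is finite; it is therefore a submodule of `M`, and its pullback along `s` is the given
one. -/

section CoverExtension

variable [LocallyFiniteOrder P] (M : PModule F P) (T : ∀ p, Submodule F (M.V p))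

theorem PModule.map_le_of_forall_covBy
    (hT : ∀ {u v : P} (h : u ⋖ v), (T u).map (M.map h.le) ≤ T v) {p q : P} (h : p ≤ q) :
    (T p).map (M.map h) ≤ T q := by
  induction le_iff_reflTransGen_covBy.mp h with
  | refl => rw [M.map_id, Submodule.map_id]
  | tail hpu huv ih =>
    rw [M.map_comp (le_iff_reflTransGen_covBy.mpr hpu) huv.le, Submodule.map_comp]
    exact (Submodule.map_mono (ih _)).trans (hT huv)

def PSubmodule.ofCovBy (hT : ∀ {u v : P} (h : u ⋖ v), (T u).map (M.map h.le) ≤ T v) :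
    PSubmodule M where
  S := T
  map_le := M.map_le_of_forall_covBy T hT

end CoverExtension

@[ext]
theorem PSubmodule.ext {M : PModule F P} {A B : PSubmodule M} (h : ∀ p, A.S p = B.S p) :
    A = B := by
  cases A; cases B; congr; exact funext h

def PSubmodule.comp {M : PModule F P} (T : PSubmodule M) (s : Folding Q P) :
    PSubmodule (M.comp s) where
  S q := T.S (s.toFun q)
  map_le h := T.map_le (s.mono h)

theorem PSubmodule.toModule_comp {M : PModule F P} (T : PSubmodule M) (s : Folding Q P) :
    (T.comp s).toModule = T.toModule.comp s :=
  rfl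

namespace PSubmodule

variable (s : Folding Q P) {M : PModule F P} (A : PSubmodule (M.comp s))

noncomputable def descendSpace (p : P) : Submodule F (M.V p) :=
  Function.surjInv_eq s.surj p ▸ A.S (Function.surjInv s.surj p)

variable {s A}

theorem descendSpace_apply (hA : A.Foldable s) (q : Q) : A.descendSpace s (s.toFun q) = A.S q :=
  eq_of_heq ((eqRec_heq_self _ _).trans (hA _ q (Function.surjInv_eq s.surj _)))

theorem descendSpace_map_le_of_covBy (hA : A.Foldable s) {u v : P} (h : u ⋖ v) :
    (A.descendSpace s u).map (M.map h.le) ≤ A.descendSpace s v := by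
  obtain ⟨a, b, hab, rfl, rfl⟩ := s.hasse h
  rw [descendSpace_apply hA, descendSpace_apply hA]
  exact A.map_le hab

noncomputable def descend [LocallyFiniteOrder P] (hA : A.Foldable s) : PSubmodule M :=
  ofCovBy M (A.descendSpace s) (descendSpace_map_le_of_covBy hA)

theorem descend_comp [LocallyFiniteOrder P] (hA : A.Foldable s) : (A.descend hA).comp s = A :=
  PSubmodule.ext (descendSpace_apply hA)

end PSubmodule

theorem foldable_submodule_folding_exists_general
    {F : Type} [Field F] {Q P : Type} [PartialOrder Q] [PartialOrder P]
    [Fintype P] (s : Folding Q P) (N : PModule F Q)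
    (hN : ∃ M : PModule F P, N = M.comp s)
    (N' : PSubmodule N) (hfold : N'.Foldable s) :
    ∃ M' : PModule F P, N'.toModule = M'.comp s := by
  classical
  obtain ⟨M, rfl⟩ := hN
  let _ : LocallyFiniteOrder P := Fintype.toLocallyFiniteOrder
  refine ⟨(N'.descend hfold).toModule, ?_⟩
  rw [← PSubmodule.toModule_comp, PSubmodule.descend_comp]

/-- If `Fld_s(N)` exists, then for any `s`-foldable submodule
`N' ⊆ N` the folding `Fld_s(N')` exists. -/
theorem foldable_submodule_folding_exists
    {F : Type} [Field F] {Q P : Type} [PartialOrder Q] [PartialOrder P]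
    [Fintype Q] [Fintype P] (s : Folding Q P) (N : PModule F Q)
    (hN : ∃ M : PModule F P, N = M.comp s)
    (N' : PSubmodule N) (hfold : N'.Foldable s) :
    ∃ M' : PModule F P, N'.toModule = M'.comp s :=
  foldable_submodule_folding_exists_general s N hN N' hfold
end

section
/- For every finite connected poset P, there exist a finite zigzag poset P_ZZ and a folding s : P_ZZ → P with P = Fld_s P_ZZ, such that the size of P_ZZ (number of points plus number of immediate pairs of its Hasse diagram) is at most 2|P| + 1, where |P| is the number of points plus the number of immediate pairs of the Hasse diagram of P. -/
open Module

variable {F : Type} [Field F] {P : Type} [PartialOrder P] {Q : Type} [PartialOrder Q]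

/-!
Unfold `P` along a walk in its Hasse diagram that passes through every immediate pair: on the
walk's indices `0, …, m` take the zigzag order whose `k`-th step goes up exactly when the walk's
`k`-th step does; sending `k` to the `k`-th point of the walk is then a folding. This zigzag has
`m + 1` points and `m` immediate pairs, so it suffices that `m` is less than the number of points
plus immediate pairs of `P`. Such a walk is found by deleting an edge `s(w, v)` at the start `w`:
if it lies on a cycle, cross it once and cover the rest from `v`; if it is a bridge, cover the two
sides separately and cross it twice, which the two separate components pay for.
-/

namespace SimpleGraph

variable {V : Type} {G H : SimpleGraph V} {u v w x : V}

def componentVerts (G : SimpleGraph V) (w : V) : Set V :=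
  {x | G.Reachable w x}

def componentEdges (G : SimpleGraph V) (w : V) : Set (Sym2 V) :=
  {e ∈ G.edgeSet | ∃ x ∈ e, G.Reachable w x}

noncomputable def componentSize (G : SimpleGraph V) (w : V) : ℕ :=
  (componentVerts G w).ncard + (componentEdges G w).ncard

lemma reachable_of_mem_edgeSet {e : Sym2 V} (he : e ∈ G.edgeSet) {y : V} (hx : x ∈ e)
    (hy : y ∈ e) : G.Reachable x y := by
  induction e using Sym2.ind with
  | _ a b =>
    have hab : G.Reachable a b := (G.mem_edgeSet.mp he).reachable
    rw [Sym2.mem_iff] at hx hy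
    rcases hx with rfl | rfl <;> rcases hy with rfl | rfl
    exacts [.refl _, hab, hab.symm, .refl _]

lemma eq_of_reachable_of_forall_not_adj (hw : ∀ v, ¬ G.Adj w v) (hx : G.Reachable w x) :
    x = w := by
  obtain ⟨_ | ⟨hadj, _⟩⟩ := hx
  exacts [rfl, (hw _ hadj).elim]

lemma componentEdges_eq_empty_of_forall_not_adj (hw : ∀ v, ¬ G.Adj w v) :
    componentEdges G w = ∅ := by
  refine Set.eq_empty_of_forall_notMem fun e ⟨he, x, hxe, hx⟩ => ?_
  obtain rfl := eq_of_reachable_of_forall_not_adj hw hx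
  exact hw _ (G.mem_edgeSet.mp (Sym2.other_spec hxe ▸ he))

lemma componentEdges_eq_of_reachable (h : G.Reachable u v) :
    componentEdges G u = componentEdges G v := by
  ext e
  exact and_congr_right fun _ => exists_congr fun x => and_congr_right fun _ =>
    ⟨h.symm.trans, h.trans⟩

lemma componentVerts_subset_of_le (hHG : H ≤ G) (hwu : G.Reachable w u) :
    componentVerts H u ⊆ componentVerts G w :=
  fun _ hx => hwu.trans (hx.mono hHG)

lemma componentEdges_subset_of_le (hHG : H ≤ G) (hwu : G.Reachable w u) :
    componentEdges H u ⊆ componentEdges G w :=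
  fun _ ⟨he, x, hxe, hx⟩ => ⟨edgeSet_mono hHG he, x, hxe, hwu.trans (hx.mono hHG)⟩

lemma one_le_componentSize [Finite V] (G : SimpleGraph V) (w : V) : 1 ≤ componentSize G w := by
  have : 0 < (componentVerts G w).ncard := (Set.ncard_pos).mpr ⟨w, Reachable.refl w⟩
  unfold componentSize
  omega

lemma reachable_deleteEdges_or (hx : G.Reachable w x) :
    (G.deleteEdges {s(w, v)}).Reachable w x ∨ (G.deleteEdges {s(w, v)}).Reachable v x := by
  rw [reachable_iff_reflTransGen] at hx
  induction hx with
  | refl => exact .inl (.refl _)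
  | @tail y z _ hyz ih =>
    by_cases he : s(y, z) = s(w, v)
    · rcases Sym2.eq_iff.mp he with ⟨-, rfl⟩ | ⟨-, rfl⟩
      exacts [.inr (.refl _), .inl (.refl _)]
    · have hyz' : (G.deleteEdges {s(w, v)}).Reachable y z :=
        (deleteEdges_adj.mpr ⟨hyz, he⟩).reachable
      exact ih.imp (·.trans hyz') (·.trans hyz')

lemma componentEdges_subset_insert_deleteEdges :
    componentEdges G w ⊆ insert s(w, v)
      (componentEdges (G.deleteEdges {s(w, v)}) w ∪
        componentEdges (G.deleteEdges {s(w, v)}) v) := by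
  rintro e ⟨he, x, hxe, hx⟩
  by_cases hev : e = s(w, v)
  · exact .inl hev
  have he' : e ∈ (G.deleteEdges {s(w, v)}).edgeSet := by
    rw [edgeSet_deleteEdges]; exact ⟨he, hev⟩
  exact .inr ((reachable_deleteEdges_or hx).imp (⟨he', x, hxe, ·⟩) (⟨he', x, hxe, ·⟩))

variable [Finite V]

lemma ncard_edgeSet_deleteEdges_lt (hwv : G.Adj w v) :
    (G.deleteEdges {s(w, v)}).edgeSet.ncard < G.edgeSet.ncard := by
  rw [edgeSet_deleteEdges]
  exact Set.ncard_sdiff_singleton_lt_of_mem hwv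

lemma componentSize_deleteEdges_add_one_le (hwv : G.Adj w v) :
    componentSize (G.deleteEdges {s(w, v)}) v + 1 ≤ componentSize G w := by
  have hle := deleteEdges_le (G := G) {s(w, v)}
  have hverts := Set.ncard_le_ncard (componentVerts_subset_of_le hle hwv.reachable)
  have hedges :
      insert s(w, v) (componentEdges (G.deleteEdges {s(w, v)}) v) ⊆ componentEdges G w :=
    Set.insert_subset ⟨hwv, w, Sym2.mem_mk_left _ _, .refl _⟩
      (componentEdges_subset_of_le hle hwv.reachable)
  have hnot : s(w, v) ∉ componentEdges (G.deleteEdges {s(w, v)}) v := fun h => by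
    simpa [edgeSet_deleteEdges] using h.1
  have := Set.ncard_le_ncard hedges
  rw [Set.ncard_insert_of_notMem hnot] at this
  unfold componentSize
  omega

lemma componentSize_deleteEdges_add_add_one_le (hwv : G.Adj w v)
    (hbridge : ¬ (G.deleteEdges {s(w, v)}).Reachable w v) :
    componentSize (G.deleteEdges {s(w, v)}) w + componentSize (G.deleteEdges {s(w, v)}) v + 1 ≤
      componentSize G w := by
  set G' := G.deleteEdges {s(w, v)}
  have hle : G' ≤ G := deleteEdges_le _
  have hverts : Disjoint (componentVerts G' w) (componentVerts G' v) :=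
    Set.disjoint_left.mpr fun x hw hv => hbridge (hw.trans hv.symm)
  have hedges : Disjoint (componentEdges G' w) (componentEdges G' v) :=
    Set.disjoint_left.mpr fun e ⟨he, x, hxe, hx⟩ ⟨_, y, hye, hy⟩ =>
      hbridge (hx.trans ((reachable_of_mem_edgeSet he hxe hye).trans hy.symm))
  have hnot : s(w, v) ∉ componentEdges G' w ∪ componentEdges G' v := by
    rintro (h | h) <;> simpa [G', edgeSet_deleteEdges] using h.1
  have hV := Set.ncard_le_ncard (Set.union_subset (componentVerts_subset_of_le hle (.refl w))
    (componentVerts_subset_of_le hle hwv.reachable))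
  have hE : insert s(w, v) (componentEdges G' w ∪ componentEdges G' v) ⊆ componentEdges G w :=
    Set.insert_subset ⟨hwv, w, Sym2.mem_mk_left _ _, .refl _⟩
      (Set.union_subset (componentEdges_subset_of_le hle (.refl w))
        (componentEdges_subset_of_le hle hwv.reachable))
  replace hE := Set.ncard_le_ncard hE
  rw [Set.ncard_union_eq hverts] at hV
  rw [Set.ncard_insert_of_notMem hnot, Set.ncard_union_eq hedges] at hE
  unfold componentSize
  omega

lemma exists_walk_componentEdges_subset_of_deleteEdges (hwv : G.Adj w v)
    (ih : ∀ {a b : V}, (G.deleteEdges {s(w, v)}).Reachable a b →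
      ∃ p : (G.deleteEdges {s(w, v)}).Walk a b,
        componentEdges (G.deleteEdges {s(w, v)}) a ⊆ p.edgeSet ∧
          p.length < componentSize (G.deleteEdges {s(w, v)}) a)
    {w' : V} (h : G.Reachable w w') :
    ∃ p : G.Walk w w', componentEdges G w ⊆ p.edgeSet ∧ p.length < componentSize G w := by
  have hcover := componentEdges_subset_insert_deleteEdges (G := G) (w := w) (v := v)
  set G' := G.deleteEdges {s(w, v)}
  have hle : G' ≤ G := deleteEdges_le _
  by_cases hr : G'.Reachable w v
  · -- `s(w, v)` lies on a cycle: cross it once, then cover the rest from `v`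
    obtain ⟨q, hq, hql⟩ := ih ((reachable_deleteEdges_or h).elim hr.symm.trans id)
    refine ⟨.cons hwv (q.mapLe hle), ?_, ?_⟩
    · rw [componentEdges_eq_of_reachable hr, Set.union_self] at hcover
      simpa [Walk.edgeSet_cons, Walk.edgeSet_mapLe_eq_edgeSet] using
        hcover.trans (Set.insert_subset_insert hq)
    · have : componentSize G' v + 1 ≤ componentSize G w :=
        componentSize_deleteEdges_add_one_le hwv
      simp only [Walk.length_cons, Walk.length_mapLe]
      omega
  -- `s(w, v)` is a bridge: cover the side not containing `w'` by a closed walk, crossing twice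
  have hsize : componentSize G' w + componentSize G' v + 1 ≤ componentSize G w :=
    componentSize_deleteEdges_add_add_one_le hwv hr
  rcases reachable_deleteEdges_or h with hw' | hw'
  · obtain ⟨c, hc, hcl⟩ := ih (Reachable.refl v)
    obtain ⟨q, hq, hql⟩ := ih hw'
    refine ⟨.cons hwv ((c.mapLe hle).append (.cons hwv.symm (q.mapLe hle))), ?_, ?_⟩
    · refine hcover.trans ?_
      simp only [Walk.edgeSet_cons, Walk.edgeSet_append, Walk.edgeSet_mapLe_eq_edgeSet]
      rintro e (rfl | he | he)
      exacts [by simp, by simp [hq he], by simp [hc he]]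
    · simp only [Walk.length_cons, Walk.length_append, Walk.length_mapLe]
      omega
  · obtain ⟨c, hc, hcl⟩ := ih (Reachable.refl w)
    obtain ⟨q, hq, hql⟩ := ih hw'
    refine ⟨(c.mapLe hle).append (.cons hwv (q.mapLe hle)), ?_, ?_⟩
    · refine hcover.trans ?_
      simp only [Walk.edgeSet_cons, Walk.edgeSet_append, Walk.edgeSet_mapLe_eq_edgeSet]
      rintro e (rfl | he | he)
      exacts [by simp, by simp [hc he], by simp [hq he]]
    · simp only [Walk.length_cons, Walk.length_append, Walk.length_mapLe]
      omega

theorem exists_walk_componentEdges_subset (G : SimpleGraph V) {w w' : V} (h : G.Reachable w w') :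
    ∃ p : G.Walk w w', componentEdges G w ⊆ p.edgeSet ∧ p.length < componentSize G w := by
  induction hn : G.edgeSet.ncard using Nat.strong_induction_on generalizing G w w' with
  | _ n ih =>
  by_cases hiso : ∀ v, ¬ G.Adj w v
  · obtain rfl := eq_of_reachable_of_forall_not_adj hiso h
    refine ⟨.nil, ?_, one_le_componentSize G w'⟩
    rw [componentEdges_eq_empty_of_forall_not_adj hiso]
    exact Set.empty_subset _
  obtain ⟨v, hwv⟩ := not_forall_not.mp hiso
  exact exists_walk_componentEdges_subset_of_deleteEdges hwv
    (fun hab => ih _ (hn ▸ ncard_edgeSet_deleteEdges_lt hwv) _ hab rfl) h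

theorem Preconnected.exists_walk_covering (hG : G.Preconnected) (w w' : V) :
    ∃ p : G.Walk w w', G.edgeSet ⊆ p.edgeSet ∧ (∀ x, x ∈ p.support) ∧
      p.length < Nat.card V + G.edgeSet.ncard := by
  have hedges : componentEdges G w = G.edgeSet :=
    Set.sep_eq_self_iff_mem_true.mpr fun e _ =>
      e.ind fun a _ => ⟨a, Sym2.mem_mk_left _ _, hG w a⟩
  have hverts : componentVerts G w = Set.univ := Set.eq_univ_of_forall (hG w)
  obtain ⟨p, hp, hlen⟩ := exists_walk_componentEdges_subset G (hG w w')
  rw [hedges] at hp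
  refine ⟨p, hp, fun x => ?_, ?_⟩
  · obtain ⟨_ | ⟨hxy, _⟩⟩ := hG x w
    exacts [p.start_mem_support, p.fst_mem_support_of_mem_edges (hp hxy)]
  · rwa [componentSize, hedges, hverts, Set.ncard_univ] at hlen

end SimpleGraph

lemma isConnectedPoset_iff_preconnected_hasse {α : Type} [PartialOrder α] :
    IsConnectedPoset α ↔ (SimpleGraph.hasse α).Preconnected :=
  forall₂_congr fun a b => (SimpleGraph.reachable_iff_reflTransGen (G := .hasse α) a b).symm

lemma ncard_edgeSet_hasse_le_coverCard (α : Type) [PartialOrder α] [Fintype α] :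
    (SimpleGraph.hasse α).edgeSet.ncard ≤ coverCard α := by
  rw [← Nat.card_coe_set_eq, coverCard]
  refine Nat.card_le_card_of_surjective
    (fun x : {x : α × α // x.1 ⋖ x.2} => ⟨s(x.1.1, x.1.2), Or.inl x.2⟩) ?_
  rintro ⟨e, he⟩
  induction e using Sym2.ind with
  | _ a b =>
    rcases he with h | h
    exacts [⟨⟨(a, b), h⟩, rfl⟩, ⟨⟨(b, a), h⟩, Subtype.ext Sym2.eq_swap⟩]

/-- The zigzag order on `ℕ` in which the step from `k` to `k + 1` goes up iff `d k`:
`i ≤ j` iff every step on the way from `i` to `j` goes up. -/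
def ZigzagLE (d : ℕ → Prop) (i j : ℕ) : Prop :=
  (i ≤ j ∧ ∀ k ∈ Set.Ico i j, d k) ∨ (j ≤ i ∧ ∀ k ∈ Set.Ico j i, ¬ d k)

namespace ZigzagLE

variable {d : ℕ → Prop} {i j k : ℕ}

lemma refl (d : ℕ → Prop) (i : ℕ) : ZigzagLE d i i :=
  .inl ⟨le_rfl, by simp⟩

lemma self_succ (hd : d i) : ZigzagLE d i (i + 1) :=
  .inl ⟨by omega, fun k hk => (show k = i by grind) ▸ hd⟩

lemma succ_self (hd : ¬ d i) : ZigzagLE d (i + 1) i :=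
  .inr ⟨by omega, fun k hk => (show k = i by grind) ▸ hd⟩

lemma eq_or_eq_of_up_down (hij : i ≤ j) (hkj : k ≤ j)
    (hup : ∀ l ∈ Set.Ico i j, d l) (hdown : ∀ l ∈ Set.Ico k j, ¬ d l) :
    i = j ∨ k = j := by
  by_contra! h
  exact hdown (j - 1) ⟨by omega, by omega⟩ (hup (j - 1) ⟨by omega, by omega⟩)

lemma eq_or_eq_of_down_up (hji : j ≤ i) (hjk : j ≤ k)
    (hdown : ∀ l ∈ Set.Ico j i, ¬ d l) (hup : ∀ l ∈ Set.Ico j k, d l) :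
    i = j ∨ k = j := by
  by_contra! h
  exact hdown j ⟨le_rfl, by omega⟩ (hup j ⟨le_rfl, by omega⟩)

lemma antisymm (hij : ZigzagLE d i j) (hji : ZigzagLE d j i) : i = j := by
  rcases hij with ⟨h1, h2⟩ | ⟨h1, h2⟩ <;> rcases hji with ⟨h3, h4⟩ | ⟨h3, h4⟩
  · omega
  · by_contra h
    exact h4 i ⟨le_rfl, by omega⟩ (h2 i ⟨le_rfl, by omega⟩)
  · by_contra h
    exact h2 j ⟨le_rfl, by omega⟩ (h4 j ⟨le_rfl, by omega⟩)
  · omega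

lemma trans (hij : ZigzagLE d i j) (hjk : ZigzagLE d j k) : ZigzagLE d i k := by
  rcases hij with ⟨h1, h2⟩ | ⟨h1, h2⟩ <;> rcases hjk with ⟨h3, h4⟩ | ⟨h3, h4⟩
  · exact .inl ⟨h1.trans h3, fun l hl => if hlj : l < j then h2 l ⟨hl.1, hlj⟩ else
      h4 l ⟨by omega, hl.2⟩⟩
  · rcases eq_or_eq_of_up_down h1 h3 h2 h4 with rfl | rfl
    exacts [.inr ⟨h3, h4⟩, .inl ⟨h1, h2⟩]
  · rcases eq_or_eq_of_down_up h1 h3 h2 h4 with rfl | rfl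
    exacts [.inl ⟨h3, h4⟩, .inr ⟨h1, h2⟩]
  · exact .inr ⟨h3.trans h1, fun l hl => if hlj : l < j then h4 l ⟨hl.1, hlj⟩ else
      h2 l ⟨by omega, hl.2⟩⟩

lemma mem_uIcc (hik : ZigzagLE d i k) (hkj : ZigzagLE d k j) : k ∈ Set.uIcc i j := by
  rw [Set.mem_uIcc]
  rcases hik with ⟨h1, h2⟩ | ⟨h1, h2⟩ <;> rcases hkj with ⟨h3, h4⟩ | ⟨h3, h4⟩
  · omega
  · rcases eq_or_eq_of_up_down h1 h3 h2 h4 with rfl | rfl <;> omega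
  · rcases eq_or_eq_of_down_up h1 h3 h2 h4 with rfl | rfl <;> omega
  · omega

lemma of_mem_uIcc (h : ZigzagLE d i j) (hk : k ∈ Set.uIcc i j) :
    ZigzagLE d i k ∧ ZigzagLE d k j := by
  rw [Set.mem_uIcc] at hk
  rcases h with ⟨h1, h2⟩ | ⟨h1, h2⟩
  · exact ⟨.inl ⟨by omega, fun l hl => h2 l ⟨hl.1, by grind⟩⟩,
      .inl ⟨by omega, fun l hl => h2 l ⟨by grind, hl.2⟩⟩⟩
  · exact ⟨.inr ⟨by omega, fun l hl => h2 l ⟨by grind, hl.2⟩⟩,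
      .inr ⟨by omega, fun l hl => h2 l ⟨hl.1, by grind⟩⟩⟩

end ZigzagLE

@[ext]
structure ZigzagPoset (d : ℕ → Prop) (n : ℕ) where
  idx : ℕ
  idx_lt : idx < n

namespace ZigzagPoset

variable {d : ℕ → Prop} {n : ℕ}

instance : PartialOrder (ZigzagPoset d n) where
  le a b := ZigzagLE d a.idx b.idx
  le_refl a := ZigzagLE.refl d a.idx
  le_trans _ _ _ := ZigzagLE.trans
  le_antisymm _ _ hab hba := ZigzagPoset.ext (hab.antisymm hba)

lemma le_def {a b : ZigzagPoset d n} : a ≤ b ↔ ZigzagLE d a.idx b.idx := Iff.rfl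

def equivFin (d : ℕ → Prop) (n : ℕ) : Fin n ≃ ZigzagPoset d n where
  toFun i := ⟨i, i.2⟩
  invFun a := ⟨a.idx, a.idx_lt⟩
  left_inv _ := rfl
  right_inv _ := rfl

instance : Fintype (ZigzagPoset d n) := Fintype.ofEquiv _ (equivFin d n)

lemma card : Fintype.card (ZigzagPoset d n) = n := by
  rw [Fintype.ofEquiv_card, Fintype.card_fin]

lemma covBy_iff {a b : ZigzagPoset d n} :
    a ⋖ b ↔ (b.idx = a.idx + 1 ∧ d a.idx) ∨ (a.idx = b.idx + 1 ∧ ¬ d b.idx) := by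
  have idx_ne {a b : ZigzagPoset d n} (h : a ≠ b) : a.idx ≠ b.idx :=
    fun e => h (ZigzagPoset.ext e)
  constructor
  · rintro ⟨hab, hmid⟩
    have hadj : b.idx = a.idx + 1 ∨ a.idx = b.idx + 1 := by
      by_contra! h
      have := idx_ne hab.ne
      let c : ZigzagPoset d n := ⟨min a.idx b.idx + 1, by grind [a.idx_lt, b.idx_lt]⟩
      obtain ⟨hac, hcb⟩ := ZigzagLE.of_mem_uIcc (k := c.idx) hab.le (by grind [Set.mem_uIcc])
      exact hmid (c := c) (lt_of_le_of_ne hac fun e => by grind)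
        (lt_of_le_of_ne hcb fun e => by grind)
    rcases le_def.mp hab.le with ⟨h1, h2⟩ | ⟨h1, h2⟩
    · exact .inl ⟨by grind, h2 _ ⟨le_rfl, by grind⟩⟩
    · exact .inr ⟨by grind, h2 _ ⟨le_rfl, by grind⟩⟩
  · intro h
    have hab : a < b := by
      refine lt_of_le_of_ne ?_ fun e => by grind
      rcases h with ⟨hb, hd⟩ | ⟨ha, hd⟩
      · exact le_def.mpr (hb ▸ ZigzagLE.self_succ hd)
      · exact le_def.mpr (ha ▸ ZigzagLE.succ_self hd)
    refine ⟨hab, fun {c} hac hcb => ?_⟩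
    have := Set.mem_uIcc.mp (ZigzagLE.mem_uIcc hac.le hcb.le)
    grind [idx_ne hac.ne, idx_ne hcb.ne]

theorem isZigzag : IsZigzag (ZigzagPoset d n) := by
  refine ⟨(finCongr card).trans (equivFin d n), fun i _ _ => ?_, fun a b hab => ?_⟩
  · by_cases hd : d i
    exacts [.inl (covBy_iff.mpr (.inl ⟨rfl, hd⟩)), .inr (covBy_iff.mpr (.inr ⟨rfl, hd⟩))]
  · rcases covBy_iff.mp hab with ⟨h, _⟩ | ⟨h, _⟩
    exacts [.inl h.symm, .inr h.symm]

lemma coverCard_le (d : ℕ → Prop) (m : ℕ) : coverCard (ZigzagPoset d (m + 1)) ≤ m := by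
  let lower (x : {x : ZigzagPoset d (m + 1) × ZigzagPoset d (m + 1) // x.1 ⋖ x.2}) : Fin m :=
    ⟨min x.1.1.idx x.1.2.idx, by grind [covBy_iff.mp x.2, x.1.1.idx_lt, x.1.2.idx_lt]⟩
  have : Function.Injective lower := by
    rintro ⟨⟨a, b⟩, hab⟩ ⟨⟨a', b'⟩, hab'⟩ h
    simp only [lower, Fin.mk.injEq] at h
    grind [covBy_iff, ZigzagPoset.ext_iff]
  simpa [coverCard] using Nat.card_le_card_of_injective lower this

end ZigzagPoset

def Folding.id (α : Type) [PartialOrder α] : Folding α α where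
  toFun := _root_.id
  surj := Function.surjective_id
  mono h := h
  hasse {u v} h := ⟨u, v, h.le, rfl, rfl⟩

lemma isZigzag_of_isEmpty (α : Type) [PartialOrder α] [Fintype α] [IsEmpty α] : IsZigzag α :=
  ⟨(Fintype.equivFin α).symm, fun i h _ => by simp at h,
    fun a _ _ => isEmptyElim ((Fintype.equivFin α).symm a)⟩

namespace SimpleGraph.Walk

variable {α : Type} [PartialOrder α] {u v : α}

def upward (p : (hasse α).Walk u v) (k : ℕ) : Prop := p.getVert k ⋖ p.getVert (k + 1)

def zigzagFolding (p : (hasse α).Walk u v) (hsupp : ∀ x, x ∈ p.support)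
    (hedges : (hasse α).edgeSet ⊆ p.edgeSet) :
    Folding (ZigzagPoset p.upward (p.length + 1)) α where
  toFun a := p.getVert a.idx
  surj x := by
    obtain ⟨k, rfl, hk⟩ := p.mem_support_iff_exists_getVert.mp (hsupp x)
    exact ⟨⟨k, by omega⟩, rfl⟩
  mono {a b} hab := by
    rcases hab with ⟨hle, hup⟩ | ⟨hle, hdown⟩
    · exact monotoneOn_of_le_add_one Set.ordConnected_Icc
        (fun k _ hk hk1 => (hup k ⟨hk.1, by grind⟩).le) ⟨le_rfl, hle⟩ ⟨hle, le_rfl⟩ hle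
    · exact antitoneOn_of_add_one_le Set.ordConnected_Icc
        (fun k _ hk hk1 => ((p.adj_getVert_succ (by grind [a.idx_lt])).resolve_left
          (hdown k ⟨hk.1, by grind⟩)).le) ⟨le_rfl, hle⟩ ⟨hle, le_rfl⟩ hle
  hasse {x y} hxy := by
    obtain ⟨i, hi, he⟩ := p.mk_mem_edges_iff_exists.mp (hedges (Or.inl hxy))
    rcases Sym2.eq_iff.mp he with ⟨hx, hy⟩ | ⟨hy, hx⟩
    · refine ⟨⟨i, by omega⟩, ⟨i + 1, by omega⟩, ZigzagLE.self_succ ?_, hx, hy⟩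
      rw [upward, hx, hy]
      exact hxy
    · refine ⟨⟨i + 1, by omega⟩, ⟨i, by omega⟩, ZigzagLE.succ_self ?_, hx, hy⟩
      rw [upward, hx, hy]
      exact fun hyx => hyx.lt.not_gt hxy.lt

end SimpleGraph.Walk

/-- Every finite connected poset `P` unfolds to a finite zigzag
poset `P_ZZ` via a folding `s : P_ZZ → P`, with `|P_ZZ| ≤ 2|P| + 1` (sizes
count points plus immediate pairs of the Hasse diagram). -/
theorem zigzag_unfolding_of_poset_exists
    {P : Type} [PartialOrder P] [Fintype P] (hconn : IsConnectedPoset P) :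
    ∃ Z : FinPoset, IsZigzag Z.carrier ∧
      ∃ _s : Folding Z.carrier P, posetSize Z.carrier ≤ 2 * posetSize P + 1 := by
  rcases isEmpty_or_nonempty P with hP | ⟨⟨w⟩⟩
  · exact ⟨⟨P⟩, isZigzag_of_isEmpty P, Folding.id P, by dsimp only; omega⟩
  obtain ⟨p, hedges, hsupp, hlen⟩ :=
    (isConnectedPoset_iff_preconnected_hasse.mp hconn).exists_walk_covering w w
  refine ⟨⟨ZigzagPoset p.upward (p.length + 1)⟩, ZigzagPoset.isZigzag,
    p.zigzagFolding hsupp hedges, ?_⟩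
  have hZ := ZigzagPoset.coverCard_le p.upward p.length
  have hP := ncard_edgeSet_hasse_le_coverCard P
  simp only [posetSize, ZigzagPoset.card, Nat.card_eq_fintype_card] at hZ hlen ⊢
  omega
end

section
/- Let M_ZZ be a zigzag module over a finite zigzag poset P_ZZ and let I ⊆ M_ZZ be a limit module that is not a full interval module, with representative b^I. Then for every point p in the support of I, the canonical map i_p : M_ZZ(p) → colim M_ZZ sends b^I_p to 0; consequently any representative of I is sent to zero in the colimit of M_ZZ. -/
open Module

variable {F : Type} [Field F] {P : Type} [PartialOrder P] {Q : Type} [PartialOrder Q]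

/-! A representative spans the one-dimensional spaces of `N`, and the structure maps of `N` are
surjective, so along every comparability `p ≤ q` the vector `b q` is a nonzero multiple of the
image of `b p` or both are zero; since `i_p = i_q ∘ M(p ≤ q)`, vanishing of `i_p (b p)` in the
colimit is therefore transported along the Hasse diagram, which is connected for a zigzag.
It holds at some point, because a limit module whose representative vanishes nowhere is full. -/

theorem LinearMap.apply_eq_zero_iff_of_span_singleton_eq {R V W : Type*} [Semiring R]
    [AddCommMonoid V] [Module R V] [AddCommMonoid W] [Module R W] (f : V →ₗ[R] W) {u v : V}
    (h : Submodule.span R {u} = Submodule.span R {v}) : f u = 0 ↔ f v = 0 := by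
  simp only [← LinearMap.mem_ker, ← Submodule.span_singleton_le_iff_mem, h]

theorem IsConnectedPoset.iff_of_covBy (hP : IsConnectedPoset P) {Φ : P → Prop}
    (hΦ : ∀ a c : P, a ⋖ c → (Φ a ↔ Φ c)) (p q : P) : Φ p ↔ Φ q := by
  induction hP p q with
  | refl => rfl
  | tail _ hac ih => exact ih.trans (hac.elim (hΦ _ _) fun h => (hΦ _ _ h).symm)

theorem IsZigzag.isConnectedPoset [Fintype P] (hP : IsZigzag P) : IsConnectedPoset P := by
  obtain ⟨e, hcov, -⟩ := hP
  have : Std.Symm fun a c : P => a ⋖ c ∨ c ⋖ a := ⟨fun _ _ => Or.symm⟩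
  intro p q
  have hpos : 0 < Fintype.card P := Fintype.card_pos_iff.mpr ⟨p⟩
  have hfirst : ∀ (i : ℕ) (hi : i < Fintype.card P),
      Relation.ReflTransGen (fun a c : P => a ⋖ c ∨ c ⋖ a) (e ⟨0, hpos⟩) (e ⟨i, hi⟩) := by
    intro i
    induction i with
    | zero => intro _; rfl
    | succ i ih => intro hi; exact (ih (by omega)).tail (hcov i _ hi)
  have hrel : ∀ r : P,
      Relation.ReflTransGen (fun a c : P => a ⋖ c ∨ c ⋖ a) (e ⟨0, hpos⟩) r := fun r => by
    simpa using hfirst (e.symm r) (e.symm r).isLt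
  exact (Std.Symm.symm _ _ (hrel p)).trans (hrel q)

theorem PModule.colimInj_map (M : PModule F P) [DecidableEq P] {p q : P} (h : p ≤ q)
    (v : M.V p) : M.colimInj q (M.map h v) = M.colimInj p v := by
  show M.colimRel.mkQ _ = M.colimRel.mkQ _
  rw [eq_comm, ← sub_eq_zero, ← map_sub, Submodule.mkQ_apply, Submodule.Quotient.mk_eq_zero]
  exact Submodule.subset_span ⟨p, q, h, v, rfl⟩

theorem IsRepr.colimInj_eq_zero_iff {M : PModule F P} [DecidableEq P] {A : PSubmodule M}
    {b : ∀ p, M.V p} (hb : IsRepr A b) {p q : P} (h : p ≤ q)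
    (hpq : (A.S p).map (M.map h) = A.S q) :
    M.colimInj p (b p) = 0 ↔ M.colimInj q (b q) = 0 := by
  rw [← M.colimInj_map h]
  apply LinearMap.apply_eq_zero_iff_of_span_singleton_eq
  rw [← hb q, ← hpq, hb p, Submodule.map_span, Set.image_singleton]

theorem IsRepr.exists_eq_zero {M : PModule F P} {A : PSubmodule M} {b : ∀ p, M.V p}
    (hb : IsRepr A b) (hsurj : ∀ (p q : P) (h : p ≤ q), (A.S p).map (M.map h) = A.S q)
    (hnotfull : ¬ IsFullIntervalSub M A) : ∃ p, b p = 0 := by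
  by_contra! hne
  exact hnotfull ⟨fun p => by rw [hb p, finrank_span_singleton (hne p)], hsurj⟩

/-- A limit module of a zigzag module which is not a full
interval module has all of its representative vectors sent to `0` by the
canonical maps into the colimit. -/
theorem nonfull_limit_module_representative_vanishes_in_colimit
    {F : Type} [Field F] {P : Type} [PartialOrder P] [Fintype P] [DecidableEq P]
    (hzz : IsZigzag P) (M : PModule F P)
    (N : PSubmodule M) (hN : IsLimitModule M N)
    (hnotfull : ¬ IsFullIntervalSub M N)
    (b : ∀ p, M.V p) (hb : IsRepr N b) :
    ∀ p, M.colimInj p (b p) = 0 := by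
  intro p
  obtain ⟨p₀, hp₀⟩ := hb.exists_eq_zero hN.2 hnotfull
  have hvanish : M.colimInj p₀ (b p₀) = 0 := by rw [hp₀, map_zero]
  exact (hzz.isConnectedPoset.iff_of_covBy (Φ := fun p => M.colimInj p (b p) = 0)
    (fun a c hac => hb.colimInj_eq_zero_iff hac.le (hN.2 a c _)) p₀ p).mp hvanish
end
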